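/- The Replica-Surrogate-Matching mechanism is Bayesian incentive compatible (Theorem of Hartline–Kleinberg–Malekian, idealized model): let T and O be measurable spaces, μ a probability measure on T, n = (n−1) + 1 ≥ 1 the number of agents, j : Fin n, and m = k + 1 ≥ 1 the number of replicas. Let A : (Fin n → T) → O be measurable and let v : T → O → ℝ be jointly measurable with |v t o| ≤ C for some constant C. For each agent ℓ : Fin n, let (σ_ℓ, p_ℓ) be a VCG matching selector for the expected weight function w_ℓ on markets of size m. For an agent with input type b and coins c = (r', s, i) ∈ (Fin (m−1) → T) × (Fin m → T) × Fin m, define the surrogate Sur_ℓ(b; c) := s (σ_ℓ(i.insertNth b r', s) i) and the payment Pay_ℓ(b; c) := p_ℓ(i.insertNth b r', s) i. For true type t and report b of agent j, define the expected utility U(t, b) := ∫ over t_{−j} ~ μ^{n−1} and over independent coins c_ℓ ~ μ^{m−1} ⊗ μ^m ⊗ uniform(Fin m), one for each agent ℓ : Fin n, of [ v(t, A(z)) − Pay_j(b; c_j) ], where the surrogate profile z : Fin n → T has z j = Sur_j(b; c_j) and, for each ℓ ≠ j with true type given by the corresponding coordinate of t_{−j}, z ℓ = Sur_ℓ(t_ℓ;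 c_ℓ). Then for all t, b : T, U(t, t) ≥ U(t, b): when all other agents report truthfully with types drawn i.i.d. from the prior μ, agent j's expected utility in the composed mechanism (each agent's type transformed into a surrogate by the Replica-Surrogate-Matching procedure, the algorithm A applied to the surrogate profile, and agent j charged its VCG payment) is maximized by truthful reporting. -/

import Mathlib

/-
Two facts make truthful reporting optimal.

The surrogate of a `μ`-distributed type is again `μ`-distributed: whatever the slot `i`, the
buyer profile (the type inserted among the replicas) is i.i.d. `μ`, and for each fixed buyer
profile the matched good is a uniformly random coordinate of an i.i.d. goods profile. So, seen
from agent `j`, the surrogates of the other agents are i.i.d. `μ` and independent of `j`'s coins,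
and by Fubini `j`'s expected utility is the expectation over its own coins of
`w_j(t, surrogate) - payment`.

Pointwise, this is the utility of buyer `i` in a VCG matching market whose weights are `w_j`, and
VCG is truthful: changing the report of buyer `i` leaves the Clarke pivot term unchanged, so the
utility difference is a difference of total matching weights, won by the optimal matching.
-/

open MeasureTheory Finset

/-- The coins of the Replica-Surrogate-Matching procedure with `k+1` replicas:
`k` fresh replica samples and `k+1` surrogate samples, all i.i.d. from the prior `μ`,
together with a uniformly random slot. -/
noncomputable def rsmCoins {T : Type*} [MeasurableSpace T] (μ : Measure T) (k : ℕ) :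
    Measure ((Fin k → T) × (Fin (k + 1) → T) × Fin (k + 1)) :=
  (Measure.pi fun _ : Fin k => μ).prod
    ((Measure.pi fun _ : Fin (k + 1) => μ).prod
      (PMF.uniformOfFintype (Fin (k + 1))).toMeasure)

/-- The surrogate output by the Replica-Surrogate-Matching procedure on report `b`
with coins `c = (r', s, i)`: insert `b` at slot `i` of the replicas `r'`, run the
matching `σ`, and return the surrogate matched to slot `i`. -/
def rsmSurrogate {T : Type*} (k : ℕ)
    (σ : (Fin (k + 1) → T) → (Fin (k + 1) → T) → Equiv.Perm (Fin (k + 1)))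
    (b : T) (c : (Fin k → T) × (Fin (k + 1) → T) × Fin (k + 1)) : T :=
  c.2.1 (σ (c.2.2.insertNth b c.1) c.2.1 c.2.2)

/-- The payment charged by the Replica-Surrogate-Matching procedure on report `b`
with coins `c = (r', s, i)`: the payment of the buyer in slot `i` in the VCG
matching market with buyers `i.insertNth b r'` and goods `s`. -/
def rsmPayment {T : Type*} (k : ℕ)
    (p : (Fin (k + 1) → T) → (Fin (k + 1) → T) → Fin (k + 1) → ℝ)
    (b : T) (c : (Fin k → T) × (Fin (k + 1) → T) × Fin (k + 1)) : ℝ :=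
  p (c.2.2.insertNth b c.1) c.2.1 c.2.2

open scoped ENNReal

section Measurability

variable {α : Type*} [MeasurableSpace α]

theorem measurable_apply_uncurry {ι : Type*} [Countable ι] [MeasurableSpace ι]
    [MeasurableSingletonClass ι] : Measurable fun q : (ι → α) × ι => q.1 q.2 :=
  measurable_from_prod_countable_left measurable_pi_apply

theorem measurable_insertNth_uncurry {n : ℕ} :
    Measurable fun q : (α × (Fin n → α)) × Fin (n + 1) =>
      (q.2.insertNth q.1.1 q.1.2 : Fin (n + 1) → α) :=
  measurable_from_prod_countable_left fun i =>
    (MeasurableEquiv.piFinSuccAbove (fun _ => α) i).symm.measurable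

end Measurability

section UniformSlot

variable {T ι : Type*} [MeasurableSpace T] [Fintype ι] [Nonempty ι] [MeasurableSpace ι]
  [MeasurableSingletonClass ι]

theorem lintegral_apply_perm_uniform (μ : Measure T) [IsProbabilityMeasure μ]
    (π : (ι → T) → Equiv.Perm ι) (hπ : Measurable fun q : (ι → T) × ι => π q.1 q.2)
    {f : T → ℝ≥0∞} (hf : Measurable f) :
    ∫⁻ q, f (q.1 (π q.1 q.2)) ∂((Measure.pi fun _ : ι => μ).prod
      (PMF.uniformOfFintype ι).toMeasure) = ∫⁻ x, f x ∂μ := by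
  have hF : Measurable fun q : (ι → T) × ι => f (q.1 (π q.1 q.2)) :=
    hf.comp (measurable_apply_uncurry.comp (measurable_fst.prodMk hπ))
  have hcard : (Fintype.card ι : ℝ≥0∞) ≠ 0 := by simp
  rw [lintegral_prod_symm _ hF.aemeasurable, lintegral_fintype]
  simp only [PMF.toMeasure_apply_singleton _ _ (measurableSet_singleton _),
    PMF.uniformOfFintype_apply, ← Finset.sum_mul]
  have hFi : ∀ i, Measurable fun s : ι → T => f (s (π s i)) := fun i =>
    hF.comp (measurable_id.prodMk measurable_const)
  rw [← lintegral_finsetSum _ fun i _ => hFi i]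
  simp only [fun s : ι → T => Equiv.sum_comp (π s) fun i => f (s i)]
  rw [lintegral_finsetSum (f := fun i (s : ι → T) => f (s i)) _
    fun i _ => hf.comp (measurable_pi_apply i)]
  simp only [fun i => (measurePreserving_eval (fun _ : ι => μ) i).lintegral_comp hf]
  rw [Finset.sum_const, Finset.card_univ, nsmul_eq_mul, mul_comm, ← mul_assoc,
    ENNReal.inv_mul_cancel hcard (by simp), one_mul]

end UniformSlot

section Surrogate

variable {T : Type*} [MeasurableSpace T] {k : ℕ}
  {σ : (Fin (k + 1) → T) → (Fin (k + 1) → T) → Equiv.Perm (Fin (k + 1))}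

instance (μ : Measure T) [IsProbabilityMeasure μ] : IsProbabilityMeasure (rsmCoins μ k) := by
  unfold rsmCoins; infer_instance

theorem measurable_rsmSurrogate
    (hσ : Measurable fun q : ((Fin (k + 1) → T) × (Fin (k + 1) → T)) × Fin (k + 1) =>
      σ q.1.1 q.1.2 q.2) :
    Measurable fun tc : T × ((Fin k → T) × (Fin (k + 1) → T) × Fin (k + 1)) =>
      rsmSurrogate k σ tc.1 tc.2 := by
  have hslot : Measurable fun tc : T × ((Fin k → T) × (Fin (k + 1) → T) × Fin (k + 1)) =>
      tc.2.2.2 := by fun_prop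
  have hgoods : Measurable fun tc : T × ((Fin k → T) × (Fin (k + 1) → T) × Fin (k + 1)) =>
      tc.2.2.1 := by fun_prop
  have hbuyers : Measurable fun tc : T × ((Fin k → T) × (Fin (k + 1) → T) × Fin (k + 1)) =>
      (tc.2.2.2.insertNth tc.1 tc.2.1 : Fin (k + 1) → T) :=
    measurable_insertNth_uncurry.comp
      ((measurable_fst.prodMk (measurable_fst.comp measurable_snd)).prodMk hslot)
  exact measurable_apply_uncurry.comp
    (hgoods.prodMk (hσ.comp ((hbuyers.prodMk hgoods).prodMk hslot)))

theorem measurePreserving_rsmSurrogate (μ : Measure T) [IsProbabilityMeasure μ]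
    (hσ : Measurable fun q : ((Fin (k + 1) → T) × (Fin (k + 1) → T)) × Fin (k + 1) =>
      σ q.1.1 q.1.2 q.2) :
    MeasurePreserving (fun tc : T × ((Fin k → T) × (Fin (k + 1) → T) × Fin (k + 1)) =>
      rsmSurrogate k σ tc.1 tc.2) (μ.prod (rsmCoins μ k)) μ := by
  refine ⟨measurable_rsmSurrogate hσ, Measure.ext_of_lintegral _ fun f hf => ?_⟩
  set replicas := Measure.pi fun _ : Fin k => μ
  set goodsSlot := (Measure.pi fun _ : Fin (k + 1) => μ).prod
    (PMF.uniformOfFintype (Fin (k + 1))).toMeasure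
  have hF : Measurable fun tc : T × ((Fin k → T) × (Fin (k + 1) → T) × Fin (k + 1)) =>
      f (rsmSurrogate k σ tc.1 tc.2) := hf.comp (measurable_rsmSurrogate hσ)
  have hassoc := measurePreserving_prodAssoc μ replicas goodsSlot
  rw [lintegral_map hf (measurable_rsmSurrogate hσ), rsmCoins, ← hassoc.lintegral_comp hF,
    lintegral_prod_symm (fun z => f (rsmSurrogate k σ (MeasurableEquiv.prodAssoc z).1
      (MeasurableEquiv.prodAssoc z).2)) (hF.comp hassoc.measurable).aemeasurable]
  -- for a fixed slot `i`, the true type and the replicas form an i.i.d. profile of buyers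
  have hbuyers : ∀ y : (Fin (k + 1) → T) × Fin (k + 1),
      ∫⁻ w : T × (Fin k → T), f (y.1 (σ (y.2.insertNth w.1 w.2) y.1 y.2))
          ∂(μ.prod replicas)
        = ∫⁻ r, f (y.1 (σ r y.1 y.2)) ∂(Measure.pi fun _ => μ) := fun y =>
    (measurePreserving_piFinSuccAbove (fun _ => μ) y.2).symm.lintegral_comp
      (hf.comp (measurable_apply_uncurry.comp (measurable_const.prodMk
        (hσ.comp ((measurable_id.prodMk measurable_const).prodMk measurable_const)))))
  have hjoint : Measurable fun z : (Fin (k + 1) → T) × ((Fin (k + 1) → T) × Fin (k + 1)) =>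
      f (z.2.1 (σ z.1 z.2.1 z.2.2)) :=
    hf.comp (measurable_apply_uncurry.comp ((measurable_fst.comp measurable_snd).prodMk
      (hσ.comp ((measurable_fst.prodMk (measurable_fst.comp measurable_snd)).prodMk
        (measurable_snd.comp measurable_snd)))))
  refine (lintegral_congr hbuyers).trans ?_
  rw [← lintegral_lintegral_swap hjoint.aemeasurable]
  -- for fixed buyers, the surrogate is a uniformly random coordinate of the goods
  have hgoods : ∀ r : Fin (k + 1) → T,
      ∫⁻ y, f (y.1 (σ r y.1 y.2)) ∂goodsSlot = ∫⁻ x, f x ∂μ := fun r =>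
    lintegral_apply_perm_uniform μ (σ r)
      (hσ.comp ((measurable_const.prodMk measurable_fst).prodMk measurable_snd)) hf
  simp only [hgoods, lintegral_const, measure_univ, mul_one]

end Surrogate

section Profile

variable {T C : Type*} [MeasurableSpace T] [MeasurableSpace C]

theorem measurePreserving_coin_and_transformed_others {n : ℕ} (μ : Measure T) (ν : Measure C)
    [SigmaFinite μ] [SigmaFinite ν] (j : Fin (n + 1)) {g : Fin n → T × C → T}
    (hg : ∀ a, MeasurePreserving (g a) (μ.prod ν) μ) :
    MeasurePreserving
      (fun q : (Fin n → T) × (Fin (n + 1) → C) =>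
        (q.2 j, fun a => g a (q.1 a, q.2 (j.succAbove a))))
      ((Measure.pi fun _ => μ).prod (Measure.pi fun _ => ν))
      (ν.prod (Measure.pi fun _ => μ)) := by
  set μs := Measure.pi fun _ : Fin n => μ
  set νs := Measure.pi fun _ : Fin n => ν
  have splitCoins : MeasurePreserving
      (Prod.map id (MeasurableEquiv.piFinSuccAbove (fun _ => C) j))
      (μs.prod (Measure.pi fun _ => ν)) (μs.prod (ν.prod νs)) :=
    (MeasurePreserving.id μs).prod (measurePreserving_piFinSuccAbove (fun _ => ν) j)
  have reorder : MeasurePreserving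
      (fun q : (Fin n → T) × C × (Fin n → C) => (q.2.1, q.1, q.2.2))
      (μs.prod (ν.prod νs)) (ν.prod (μs.prod νs)) :=
    (measurePreserving_prodAssoc ν μs νs).comp <|
      (Measure.measurePreserving_swap.prod (MeasurePreserving.id νs)).comp
        (measurePreserving_prodAssoc μs ν νs).symm
  have pairUp : MeasurePreserving
      (Prod.map id (MeasurableEquiv.arrowProdEquivProdArrow T C (Fin n)).symm)
      (ν.prod (μs.prod νs)) (ν.prod (Measure.pi fun _ => μ.prod ν)) :=
    (MeasurePreserving.id ν).prod
      (measurePreserving_arrowProdEquivProdArrow T C (Fin n) (fun _ => μ) (fun _ => ν)).symm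
  have transform : MeasurePreserving (Prod.map id fun h a => g a (h a))
      (ν.prod (Measure.pi fun _ => μ.prod ν)) (ν.prod μs) :=
    (MeasurePreserving.id ν).prod (measurePreserving_pi _ _ hg)
  exact transform.comp (pairUp.comp (reorder.comp splitCoins))

end Profile

section VCG

variable {ι R S : Type*} [Fintype ι] [DecidableEq ι] {W : R → S → ℝ}
  {σ : (ι → R) → (ι → S) → Equiv.Perm ι} {p : (ι → R) → (ι → S) → ι → ℝ}

def IsMaxWeightMatching (W : R → S → ℝ) (σ : (ι → R) → (ι → S) → Equiv.Perm ι) :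
    Prop :=
  ∀ (r : ι → R) (s : ι → S) (τ : Equiv.Perm ι),
    ∑ a, W (r a) (s (τ a)) ≤ ∑ a, W (r a) (s (σ r s a))

def IsVCGPayment (W : R → S → ℝ) (σ : (ι → R) → (ι → S) → Equiv.Perm ι)
    (p : (ι → R) → (ι → S) → ι → ℝ) : Prop :=
  ∀ (r : ι → R) (s : ι → S) (a : ι),
    p r s a = (⨆ τ : Equiv.Perm ι, ∑ a' ∈ univ.erase a, W (r a') (s (τ a')))
      - ∑ a' ∈ univ.erase a, W (r a') (s (σ r s a'))

theorem vcg_utility_le_truthful (hσ : IsMaxWeightMatching W σ) (hp : IsVCGPayment W σ p)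
    {r r' : ι → R} {i : ι} (hr' : ∀ a ≠ i, r' a = r a) (s : ι → S) :
    W (r i) (s (σ r' s i)) - p r' s i ≤ W (r i) (s (σ r s i)) - p r s i := by
  have hothers : ∀ τ : Equiv.Perm ι,
      ∑ a ∈ univ.erase i, W (r' a) (s (τ a)) = ∑ a ∈ univ.erase i, W (r a) (s (τ a)) :=
    fun τ => sum_congr rfl fun a ha => by rw [hr' a (ne_of_mem_erase ha)]
  have hopt := hσ r s (σ r' s)
  rw [← add_sum_erase _ _ (mem_univ i), ← add_sum_erase _ _ (mem_univ i)] at hopt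
  rw [hp r s i, hp r' s i]
  simp only [hothers]
  linarith

theorem abs_vcgPayment_le (hp : IsVCGPayment W σ p)
    {C : ℝ} (hW : ∀ x y, |W x y| ≤ C) (r : ι → R) (s : ι → S) (a : ι) :
    |p r s a| ≤ 2 * (#(univ.erase a) * C) := by
  have hsum : ∀ τ : Equiv.Perm ι,
      |∑ a' ∈ univ.erase a, W (r a') (s (τ a'))| ≤ #(univ.erase a) * C :=
    fun τ => (abs_sum_le_sum_abs _ _).trans <| by
      rw [← nsmul_eq_mul]
      exact sum_le_card_nsmul _ _ _ fun a' _ => hW (r a') (s (τ a'))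
  have hsup : |⨆ τ : Equiv.Perm ι, ∑ a' ∈ univ.erase a, W (r a') (s (τ a'))|
      ≤ #(univ.erase a) * C :=
    abs_le.2 ⟨(abs_le.1 (hsum 1)).1.trans (le_ciSup (f := fun τ : Equiv.Perm ι =>
      ∑ a' ∈ univ.erase a, W (r a') (s (τ a'))) (Set.finite_range _).bddAbove 1),
      ciSup_le fun τ => (abs_le.1 (hsum τ)).2⟩
  rw [hp r s a]
  linarith [abs_sub _ _ |>.trans (add_le_add hsup (hsum (σ r s)))]

end VCG

theorem integral_prod_sub_eq_integral_integral_sub {X Y : Type*} [MeasurableSpace X]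
    [MeasurableSpace Y] {ν : Measure X} {ρ : Measure Y} [IsFiniteMeasure ν]
    [IsProbabilityMeasure ρ] {F : X → Y → ℝ} {π : X → ℝ}
    (hF : Measurable (Function.uncurry F)) (hπ : Measurable π) {D B : ℝ}
    (hFD : ∀ x y, |F x y| ≤ D) (hπB : ∀ x, |π x| ≤ B) :
    ∫ z, (F z.1 z.2 - π z.1) ∂(ν.prod ρ) = ∫ x, ((∫ y, F x y ∂ρ) - π x) ∂ν := by
  have hint : Integrable (fun z : X × Y => F z.1 z.2 - π z.1) (ν.prod ρ) :=
    .of_bound (hF.sub (hπ.comp measurable_fst)).aestronglyMeasurable (D + B) <|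
      ae_of_all _ fun z => (abs_sub _ _).trans (add_le_add (hFD _ _) (hπB _))
  rw [integral_prod _ hint]
  refine integral_congr_ae (ae_of_all _ fun x => ?_)
  have hFx : Integrable (F x) ρ :=
    .of_bound (hF.comp measurable_prodMk_left).aestronglyMeasurable D (ae_of_all _ (hFD x))
  simp [integral_sub hFx (integrable_const _)]

theorem rsm_interim_utility_le {T : Type*} {k : ℕ} {W : T → T → ℝ}
    {σ : (Fin (k + 1) → T) → (Fin (k + 1) → T) → Equiv.Perm (Fin (k + 1))}
    {p : (Fin (k + 1) → T) → (Fin (k + 1) → T) → Fin (k + 1) → ℝ}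
    (hσ : IsMaxWeightMatching W σ) (hp : IsVCGPayment W σ p)
    (t b : T) (c : (Fin k → T) × (Fin (k + 1) → T) × Fin (k + 1)) :
    W t (rsmSurrogate k σ b c) - rsmPayment k p b c
      ≤ W t (rsmSurrogate k σ t c) - rsmPayment k p t c := by
  obtain ⟨r', s, i⟩ := c
  have hreplicas : ∀ a ≠ i,
      (i.insertNth b r' : Fin (k + 1) → T) a = (i.insertNth t r' : Fin (k + 1) → T) a := by
    intro a ha
    obtain ⟨a, rfl⟩ := Fin.exists_succAbove_eq ha
    simp
  have h := vcg_utility_le_truthful hσ hp hreplicas s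
  rw [Fin.insertNth_apply_same] at h
  exact h

section RSM

variable {T O : Type*} [MeasurableSpace T] [MeasurableSpace O] {k : ℕ}

theorem measurable_rsmPayment
    {p : (Fin (k + 1) → T) → (Fin (k + 1) → T) → Fin (k + 1) → ℝ}
    (hp : Measurable fun q : ((Fin (k + 1) → T) × (Fin (k + 1) → T)) × Fin (k + 1) =>
      p q.1.1 q.1.2 q.2) :
    Measurable fun tc : T × ((Fin k → T) × (Fin (k + 1) → T) × Fin (k + 1)) =>
      rsmPayment k p tc.1 tc.2 :=
  hp.comp (((measurable_insertNth_uncurry.comp ((measurable_fst.prodMk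
    (measurable_fst.comp measurable_snd)).prodMk (by fun_prop))).prodMk (by fun_prop)).prodMk
      (by fun_prop))

/-- The expected utility `U(t, b)` of agent `j` with true type `t` reporting `b`. -/
noncomputable def rsmUtility {nm1 : ℕ} (μ : Measure T) (j : Fin (nm1 + 1))
    (A : (Fin (nm1 + 1) → T) → O) (v : T → O → ℝ)
    (σ : Fin (nm1 + 1) →
      (Fin (k + 1) → T) → (Fin (k + 1) → T) → Equiv.Perm (Fin (k + 1)))
    (p : Fin (nm1 + 1) → (Fin (k + 1) → T) → (Fin (k + 1) → T) → Fin (k + 1) → ℝ)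
    (t b : T) : ℝ :=
  ∫ q : (Fin nm1 → T) ×
      (Fin (nm1 + 1) → (Fin k → T) × (Fin (k + 1) → T) × Fin (k + 1)),
    (v t (A (j.insertNth (rsmSurrogate k (σ j) b (q.2 j))
        (fun a : Fin nm1 =>
          rsmSurrogate k (σ (j.succAbove a)) (q.1 a) (q.2 (j.succAbove a)))))
      - rsmPayment k (p j) b (q.2 j))
    ∂((Measure.pi fun _ : Fin nm1 => μ).prod (Measure.pi fun _ : Fin (nm1 + 1) => rsmCoins μ k))

theorem integrable_rsm_interim_utility (μ : Measure T) [IsProbabilityMeasure μ]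
    {σ : (Fin (k + 1) → T) → (Fin (k + 1) → T) → Equiv.Perm (Fin (k + 1))}
    (hσ : Measurable fun q : ((Fin (k + 1) → T) × (Fin (k + 1) → T)) × Fin (k + 1) =>
      σ q.1.1 q.1.2 q.2)
    {p : (Fin (k + 1) → T) → (Fin (k + 1) → T) → Fin (k + 1) → ℝ}
    (hp : Measurable fun q : ((Fin (k + 1) → T) × (Fin (k + 1) → T)) × Fin (k + 1) =>
      p q.1.1 q.1.2 q.2)
    {B : ℝ} (hpB : ∀ r s a, |p r s a| ≤ B) {w : T → ℝ} (hw : Measurable w) {C : ℝ}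
    (hwC : ∀ s, |w s| ≤ C) (b : T) :
    Integrable (fun c => w (rsmSurrogate k σ b c) - rsmPayment k p b c) (rsmCoins μ k) :=
  .of_bound ((hw.comp ((measurable_rsmSurrogate hσ).comp (measurable_const.prodMk
    measurable_id))).sub ((measurable_rsmPayment hp).comp
      (measurable_const.prodMk measurable_id))).aestronglyMeasurable (C + B) <|
    ae_of_all _ fun _ => (abs_sub _ _).trans (add_le_add (hwC _) (hpB _ _ _))

theorem rsmUtility_eq_integral {nm1 : ℕ} (μ : Measure T) [IsProbabilityMeasure μ]
    (j : Fin (nm1 + 1)) {A : (Fin (nm1 + 1) → T) → O} (hA : Measurable A)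
    {v : T → O → ℝ} (hv : Measurable fun q : T × O => v q.1 q.2)
    {C : ℝ} (hC : ∀ t o, |v t o| ≤ C)
    {σ : Fin (nm1 + 1) →
      (Fin (k + 1) → T) → (Fin (k + 1) → T) → Equiv.Perm (Fin (k + 1))}
    (hσ : ∀ ℓ, Measurable
      fun q : ((Fin (k + 1) → T) × (Fin (k + 1) → T)) × Fin (k + 1) => σ ℓ q.1.1 q.1.2 q.2)
    {p : Fin (nm1 + 1) → (Fin (k + 1) → T) → (Fin (k + 1) → T) → Fin (k + 1) → ℝ}
    (hp : Measurable fun q : ((Fin (k + 1) → T) × (Fin (k + 1) → T)) × Fin (k + 1) =>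
      p j q.1.1 q.1.2 q.2)
    {B : ℝ} (hpB : ∀ r s a, |p j r s a| ≤ B) (t b : T) :
    rsmUtility μ j A v σ p t b =
      ∫ c, ((∫ x, v t (A (j.insertNth (rsmSurrogate k (σ j) b c) x))
          ∂(Measure.pi fun _ => μ)) - rsmPayment k (p j) b c) ∂(rsmCoins μ k) := by
  have hmp := measurePreserving_coin_and_transformed_others μ (rsmCoins μ k) j
    (g := fun a tc => rsmSurrogate k (σ (j.succAbove a)) tc.1 tc.2)
    fun a => measurePreserving_rsmSurrogate μ (hσ _)
  have hF : Measurable (Function.uncurry fun c (x : Fin nm1 → T) =>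
      v t (A (j.insertNth (rsmSurrogate k (σ j) b c) x))) :=
    hv.comp (measurable_const.prodMk (hA.comp (measurable_insertNth_uncurry.comp
      (((((measurable_rsmSurrogate (hσ j)).comp (measurable_const.prodMk measurable_id)).comp
        measurable_fst).prodMk measurable_snd).prodMk measurable_const))))
  have hπ : Measurable (rsmPayment k (p j) b) :=
    (measurable_rsmPayment hp).comp (measurable_const.prodMk measurable_id)
  rw [rsmUtility, ← integral_prod_sub_eq_integral_integral_sub hF hπ (fun _ _ => hC _ _)
    (fun _ => hpB _ _ _), ← hmp.map_eq]
  exact (integral_map hmp.measurable.aemeasurable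
    (hF.sub (hπ.comp measurable_fst)).aestronglyMeasurable).symm

end RSM

/-- The Replica-Surrogate-Matching mechanism is Bayesian incentive compatible
(Hartline–Kleinberg–Malekian, idealized model): with `n = nm1 + 1` agents,
`m = k + 1` replicas, a measurable algorithm `A`, a bounded jointly measurable
valuation `v`, expected weights `W ℓ r s = 𝔼_{x ~ μ^{n-1}} v r (A (ℓ.insertNth s x))`,
and per-agent VCG matching selectors `(σ ℓ, p ℓ)` for `W ℓ` on markets of size `m`,
agent `j`'s expected utility — over the other agents' i.i.d. `μ`-types and independent
RSM coins for every agent, with every other agent reporting truthfully, the algorithm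
applied to the surrogate profile and agent `j` charged its VCG payment — is maximized
by truthful reporting: `U t t ≥ U t b` for all `t b : T`. -/
theorem rsm_bayesian_incentive_compatible
    {T O : Type*} [MeasurableSpace T] [MeasurableSpace O]
    (μ : Measure T) [IsProbabilityMeasure μ]
    (nm1 : ℕ) (j : Fin (nm1 + 1)) (k : ℕ)
    (A : (Fin (nm1 + 1) → T) → O) (hA : Measurable A)
    (v : T → O → ℝ) (hv : Measurable fun q : T × O => v q.1 q.2)
    (C : ℝ) (hC : ∀ (t : T) (o : O), |v t o| ≤ C)
    (W : Fin (nm1 + 1) → T → T → ℝ)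
    (hW : ∀ (ℓ : Fin (nm1 + 1)) (r s : T),
      W ℓ r s = ∫ x, v r (A (ℓ.insertNth s x)) ∂(Measure.pi fun _ : Fin nm1 => μ))
    (σ : Fin (nm1 + 1) →
      (Fin (k + 1) → T) → (Fin (k + 1) → T) → Equiv.Perm (Fin (k + 1)))
    (p : Fin (nm1 + 1) →
      (Fin (k + 1) → T) → (Fin (k + 1) → T) → Fin (k + 1) → ℝ)
    (hσmeas : ∀ ℓ : Fin (nm1 + 1), Measurable
      (fun q : ((Fin (k + 1) → T) × (Fin (k + 1) → T)) × Fin (k + 1) =>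
        σ ℓ q.1.1 q.1.2 q.2))
    (hpmeas : ∀ ℓ : Fin (nm1 + 1), Measurable
      (fun q : ((Fin (k + 1) → T) × (Fin (k + 1) → T)) × Fin (k + 1) =>
        p ℓ q.1.1 q.1.2 q.2))
    (hσopt : ∀ (ℓ : Fin (nm1 + 1)) (r s : Fin (k + 1) → T)
      (τ : Equiv.Perm (Fin (k + 1))),
      ∑ a, W ℓ (r a) (s (τ a)) ≤ ∑ a, W ℓ (r a) (s (σ ℓ r s a)))
    (hpay : ∀ (ℓ : Fin (nm1 + 1)) (r s : Fin (k + 1) → T) (a : Fin (k + 1)),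
      p ℓ r s a =
        (⨆ τ : Equiv.Perm (Fin (k + 1)),
          ∑ a' ∈ univ.erase a, W ℓ (r a') (s (τ a')))
          - ∑ a' ∈ univ.erase a, W ℓ (r a') (s (σ ℓ r s a'))) :
    ∀ t b : T,
      (∫ q : (Fin nm1 → T) ×
          (Fin (nm1 + 1) → (Fin k → T) × (Fin (k + 1) → T) × Fin (k + 1)),
          (v t (A (j.insertNth (rsmSurrogate k (σ j) t (q.2 j))
              (fun a : Fin nm1 =>
                rsmSurrogate k (σ (j.succAbove a)) (q.1 a) (q.2 (j.succAbove a)))))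
            - rsmPayment k (p j) t (q.2 j))
        ∂((Measure.pi fun _ : Fin nm1 => μ).prod
          (Measure.pi fun _ : Fin (nm1 + 1) => rsmCoins μ k)))
      ≥
      (∫ q : (Fin nm1 → T) ×
          (Fin (nm1 + 1) → (Fin k → T) × (Fin (k + 1) → T) × Fin (k + 1)),
          (v t (A (j.insertNth (rsmSurrogate k (σ j) b (q.2 j))
              (fun a : Fin nm1 =>
                rsmSurrogate k (σ (j.succAbove a)) (q.1 a) (q.2 (j.succAbove a)))))
            - rsmPayment k (p j) b (q.2 j))
        ∂((Measure.pi fun _ : Fin nm1 => μ).prod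
          (Measure.pi fun _ : Fin (nm1 + 1) => rsmCoins μ k))) := by
  intro t b
  have hWC : ∀ r s, |W j r s| ≤ C := fun r s => by
    simpa [hW] using norm_integral_le_of_norm_le_const (μ := Measure.pi fun _ : Fin nm1 => μ)
      (ae_of_all _ fun x => (Real.norm_eq_abs _).trans_le (hC r (A (j.insertNth s x))))
  have hWt : Measurable (W j t) := by
    rw [funext (hW j t)]
    exact (hv.comp (measurable_const.prodMk (hA.comp (MeasurableEquiv.piFinSuccAbove
      (fun _ => T) j).symm.measurable))).stronglyMeasurable.integral_prod_right'.measurable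
  have hpB : ∀ r s a, |p j r s a| ≤ 2 * (k * C) := fun r s a => by
    simpa using abs_vcgPayment_le (hpay j) hWC r s a
  have hU : ∀ X, rsmUtility μ j A v σ p t X
      = ∫ c, (W j t (rsmSurrogate k (σ j) X c) - rsmPayment k (p j) X c) ∂(rsmCoins μ k) :=
    fun X => by simpa only [hW j t] using
      rsmUtility_eq_integral μ j hA hv hC hσmeas (hpmeas j) hpB t X
  show rsmUtility μ j A v σ p t b ≤ rsmUtility μ j A v σ p t t
  rw [hU, hU]
  exact integral_mono
    (integrable_rsm_interim_utility μ (hσmeas j) (hpmeas j) hpB hWt (hWC t) b)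
    (integrable_rsm_interim_utility μ (hσmeas j) (hpmeas j) hpB hWt (hWC t) t)
    (rsm_interim_utility_le (hσopt j) (hpay j) t b)
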